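/- Interpolation step of the Nash inequality: for all ψ in the strip D = ℝ × [−πl, πl] (periodic in y) and every ρ > 0, ‖ψ‖₂² ≤ C ρ(lρ + 1)/l · ‖ψ‖₁² + C ρ^{−2} ‖∇ψ‖₂², where C is a universal constant. -/

import Mathlib

open Real MeasureTheory Set

set_option maxHeartbeats 1000000

/-- The strip `D = ℝ × [-πl, πl]`. -/
def strip (l : ℝ) : Set (ℝ × ℝ) := {p | p.2 ∈ Icc (-(π * l)) (π * l)}

/-- Partial derivative in `x`. -/
noncomputable def pderivX (f : ℝ × ℝ → ℝ) (p : ℝ × ℝ) : ℝ :=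
  deriv (fun x => f (x, p.2)) p.1

/-- Partial derivative in `y`. -/
noncomputable def pderivY (f : ℝ × ℝ → ℝ) (p : ℝ × ℝ) : ℝ :=
  deriv (fun y => f (p.1, y)) p.2

/-- Squared length of the gradient `|∇f|²`. -/
noncomputable def gradSq (f : ℝ × ℝ → ℝ) (p : ℝ × ℝ) : ℝ :=
  pderivX f p ^ 2 + pderivY f p ^ 2

/- ## Auxiliary lemmas -/

lemma myCS {α : Type*} [MeasurableSpace α] (μ : Measure α) (f g : α → ℝ)
    (hf0 : ∀ x, 0 ≤ f x) (hg0 : ∀ x, 0 ≤ g x)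
    (hfm : AEStronglyMeasurable f μ) (hgm : AEStronglyMeasurable g μ)
    (hf2 : Integrable (fun x => f x ^ 2) μ) (hg2 : Integrable (fun x => g x ^ 2) μ) :
    ∫ x, f x * g x ∂μ ≤ Real.sqrt (∫ x, f x ^ 2 ∂μ) * Real.sqrt (∫ x, g x ^ 2 ∂μ) := by
  have hpq : Real.HolderConjugate 2 2 := Real.holderConjugate_iff.mpr ⟨one_lt_two, by norm_num⟩
  have hfℒ : MemLp f (ENNReal.ofReal 2) μ := by
    rw [show ENNReal.ofReal (2:ℝ) = 2 by norm_num]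
    exact (memLp_two_iff_integrable_sq hfm).2 (by simpa [sq] using hf2)
  have hgℒ : MemLp g (ENNReal.ofReal 2) μ := by
    rw [show ENNReal.ofReal (2:ℝ) = 2 by norm_num]
    exact (memLp_two_iff_integrable_sq hgm).2 (by simpa [sq] using hg2)
  have := integral_mul_le_Lp_mul_Lq_of_nonneg hpq (Filter.Eventually.of_forall hf0)
    (Filter.Eventually.of_forall hg0) hfℒ hgℒ
  calc ∫ x, f x * g x ∂μ ≤ (∫ x, f x ^ (2:ℝ) ∂μ) ^ (1/2:ℝ) * (∫ x, g x ^ (2:ℝ) ∂μ) ^ (1/2:ℝ) := this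
  _ = Real.sqrt (∫ x, f x ^ 2 ∂μ) * Real.sqrt (∫ x, g x ^ 2 ∂μ) := by
      rw [← Real.sqrt_eq_rpow, ← Real.sqrt_eq_rpow]
      norm_num [Real.rpow_natCast]

lemma lineA (f f' : ℝ → ℝ) (hd : ∀ s, HasDerivAt f (f' s) s) (hcf : Continuous f)
    (hc : Continuous f')
    (h2 : Integrable (fun s => f s ^ 2)) (h1 : Integrable (fun s => |f s * f' s|)) (x : ℝ) :
    f x ^ 2 ≤ 2 * ∫ s, |f s * f' s| := by
  refine le_of_forall_pos_le_add fun ε hε => ?_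
  have hex : ∃ s, x ≤ s ∧ f s ^ 2 < ε := by
    by_contra h
    push_neg at h
    have h3 := h2.measure_ge_lt_top hε
    have hsub : Ici x ⊆ {s | ε ≤ f s ^ 2} := fun s hs => h s hs
    have := (measure_mono hsub).trans_lt h3
    simp at this
  obtain ⟨s, hxs, hsε⟩ := hex
  have hderiv : ∀ t ∈ uIcc x s, HasDerivAt (fun u => f u ^ 2) (2 * f t * f' t) t := by
    intro t _
    simpa [mul_comm, mul_assoc, mul_left_comm] using (hd t).fun_pow 2
  have hint : IntervalIntegrable (fun t => 2 * f t * f' t) volume x s :=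
    (((continuous_const.mul hcf).mul hc)).intervalIntegrable _ _
  have heq := intervalIntegral.integral_eq_sub_of_hasDerivAt hderiv hint
  have habs : |∫ t in x..s, 2 * f t * f' t| ≤ ∫ t in x..s, |2 * f t * f' t| :=
    intervalIntegral.abs_integral_le_integral_abs hxs
  have h1' : Integrable (fun t => |2 * f t * f' t|) := by
    have : (fun t => |2 * f t * f' t|) = fun t => 2 * |f t * f' t| := by
      funext t; rw [mul_assoc, abs_mul]; simp [abs_of_nonneg]
    rw [this]; exact h1.const_mul 2
  have hle : ∫ t in x..s, |2 * f t * f' t| ≤ ∫ t, |2 * f t * f' t| := by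
    rw [intervalIntegral.integral_of_le hxs]
    exact setIntegral_le_integral h1' (Filter.Eventually.of_forall fun t => abs_nonneg _)
  have : f x ^ 2 = f s ^ 2 - ∫ t in x..s, 2 * f t * f' t := by rw [heq]; ring
  have h2int : (∫ t, |2 * f t * f' t|) = 2 * ∫ s, |f s * f' s| := by
    rw [← integral_const_mul]
    congr 1; funext t; rw [mul_assoc, abs_mul]; simp [abs_of_nonneg]
  nlinarith [abs_nonneg (∫ t in x..s, 2 * f t * f' t), neg_abs_le (∫ t in x..s, 2 * f t * f' t)]

lemma lineB (f f' : ℝ → ℝ) (hd : ∀ s, HasDerivAt f (f' s) s) (hcf : Continuous f)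
    (hc : Continuous f') {a b : ℝ} (hab : a < b) {y : ℝ} (hy : y ∈ Icc a b) :
    f y ^ 2 ≤ (b - a)⁻¹ * (∫ t in Icc a b, f t ^ 2) + 2 * ∫ t in Icc a b, |f t * f' t| := by
  obtain ⟨y₀, hy₀m, hy₀min⟩ := isCompact_Icc.exists_isMinOn (Set.nonempty_Icc.2 hab.le)
    ((hcf.pow 2).continuousOn (s := Icc a b))
  have hmean : f y₀ ^ 2 ≤ (b - a)⁻¹ * ∫ t in Icc a b, f t ^ 2 := by
    have hint : IntegrableOn (fun t => f t ^ 2) (Icc a b) :=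
      ((hcf.pow 2)).integrableOn_Icc
    have hconst : ∫ _ in Icc a b, f y₀ ^ 2 = (b - a) * f y₀ ^ 2 := by
      rw [setIntegral_const, Real.volume_real_Icc_of_le hab.le, smul_eq_mul]
    have hmono : ∫ _ in Icc a b, f y₀ ^ 2 ≤ ∫ t in Icc a b, f t ^ 2 :=
      setIntegral_mono_on (integrableOn_const (by simp [Real.volume_Icc])) hint
        measurableSet_Icc (fun t ht => hy₀min ht)
    rw [hconst] at hmono
    have hba : (0:ℝ) < b - a := by linarith
    calc f y₀ ^ 2 = (b-a)⁻¹ * ((b-a) * f y₀ ^ 2) := by field_simp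
    _ ≤ (b - a)⁻¹ * ∫ t in Icc a b, f t ^ 2 := by
        exact mul_le_mul_of_nonneg_left hmono (by positivity)
  have hderiv : ∀ t ∈ uIcc y₀ y, HasDerivAt (fun u => f u ^ 2) (2 * f t * f' t) t := by
    intro t _
    simpa [mul_comm, mul_assoc, mul_left_comm] using (hd t).fun_pow 2
  have hint : IntervalIntegrable (fun t => 2 * f t * f' t) volume y₀ y :=
    (((continuous_const.mul hcf).mul hc)).intervalIntegrable _ _
  have heq := intervalIntegral.integral_eq_sub_of_hasDerivAt hderiv hint
  have huIcc : uIcc y₀ y ⊆ Icc a b := uIcc_subset_Icc hy₀m hy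
  have hintabs : IntegrableOn (fun t => |2 * f t * f' t|) (Icc a b) :=
    (((continuous_const.mul hcf).mul hc).abs).integrableOn_Icc
  have habs : |∫ t in y₀..y, 2 * f t * f' t| ≤ ∫ t in Icc a b, |2 * f t * f' t| := by
    rcases le_total y₀ y with h | h
    · calc |∫ t in y₀..y, 2 * f t * f' t| ≤ ∫ t in y₀..y, |2 * f t * f' t| :=
        intervalIntegral.abs_integral_le_integral_abs h
      _ = ∫ t in Ioc y₀ y, |2 * f t * f' t| := intervalIntegral.integral_of_le h
      _ ≤ ∫ t in Icc a b, |2 * f t * f' t| := by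
        apply setIntegral_mono_set hintabs (Filter.Eventually.of_forall fun t => abs_nonneg _)
        exact HasSubset.Subset.eventuallyLE (Ioc_subset_Icc_self.trans
          ((uIcc_of_le h ▸ huIcc : Icc y₀ y ⊆ Icc a b)))
    · rw [intervalIntegral.integral_symm, abs_neg]
      calc |∫ t in y..y₀, 2 * f t * f' t| ≤ ∫ t in y..y₀, |2 * f t * f' t| :=
        intervalIntegral.abs_integral_le_integral_abs h
      _ = ∫ t in Ioc y y₀, |2 * f t * f' t| := intervalIntegral.integral_of_le h
      _ ≤ ∫ t in Icc a b, |2 * f t * f' t| := by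
        apply setIntegral_mono_set hintabs (Filter.Eventually.of_forall fun t => abs_nonneg _)
        exact HasSubset.Subset.eventuallyLE (Ioc_subset_Icc_self.trans
          ((uIcc_of_ge h ▸ huIcc : Icc y y₀ ⊆ Icc a b)))
  have hconv : ∫ t in Icc a b, |2 * f t * f' t| = 2 * ∫ t in Icc a b, |f t * f' t| := by
    rw [← integral_const_mul]
    congr 1; funext t; rw [mul_assoc, abs_mul]; simp [abs_of_nonneg]
  rw [← hconv]
  linarith [le_abs_self (∫ t in y₀..y, 2 * f t * f' t)]

lemma hasDerivX {ψ : ℝ × ℝ → ℝ} (hψ : ContDiff ℝ (⊤ : ℕ∞) ψ) (a b : ℝ) :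
    HasDerivAt (fun x => ψ (x, b)) (pderivX ψ (a, b)) a := by
  have h1 : HasDerivAt (fun x : ℝ => (x, b)) ((1:ℝ), (0:ℝ)) a :=
    (hasDerivAt_id a).prodMk (hasDerivAt_const a b)
  have h2 := ((hψ.differentiable (by simp)) (a, b)).hasFDerivAt.comp_hasDerivAt a h1
  have h3 : pderivX ψ (a, b) = fderiv ℝ ψ (a, b) (1, 0) := by
    simpa [pderivX, Function.comp_def] using h2.deriv
  rw [h3]; exact h2

lemma hasDerivY {ψ : ℝ × ℝ → ℝ} (hψ : ContDiff ℝ (⊤ : ℕ∞) ψ) (a b : ℝ) :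
    HasDerivAt (fun y => ψ (a, y)) (pderivY ψ (a, b)) b := by
  have h1 : HasDerivAt (fun y : ℝ => (a, y)) ((0:ℝ), (1:ℝ)) b :=
    (hasDerivAt_const b a).prodMk (hasDerivAt_id b)
  have h2 := ((hψ.differentiable (by simp)) (a, b)).hasFDerivAt.comp_hasDerivAt b h1
  have h3 : pderivY ψ (a, b) = fderiv ℝ ψ (a, b) (0, 1) := by
    simpa [pderivY, Function.comp_def] using h2.deriv
  rw [h3]; exact h2

lemma contPDX {ψ : ℝ × ℝ → ℝ} (hψ : ContDiff ℝ (⊤ : ℕ∞) ψ) : Continuous (pderivX ψ) := by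
  have : (pderivX ψ) = fun p => fderiv ℝ ψ p (1, 0) := by
    funext p
    have h1 : HasDerivAt (fun x : ℝ => (x, p.2)) ((1:ℝ), (0:ℝ)) p.1 :=
      (hasDerivAt_id p.1).prodMk (hasDerivAt_const p.1 p.2)
    have h2 := ((hψ.differentiable (by simp)) p).hasFDerivAt.comp_hasDerivAt p.1 h1
    simpa [pderivX, Function.comp_def] using h2.deriv
  rw [this]
  exact (hψ.continuous_fderiv (by simp)).clm_apply continuous_const

lemma contPDY {ψ : ℝ × ℝ → ℝ} (hψ : ContDiff ℝ (⊤ : ℕ∞) ψ) : Continuous (pderivY ψ) := by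
  have : (pderivY ψ) = fun p => fderiv ℝ ψ p (0, 1) := by
    funext p
    have h1 : HasDerivAt (fun y : ℝ => (p.1, y)) ((0:ℝ), (1:ℝ)) p.2 :=
      (hasDerivAt_const p.2 p.1).prodMk (hasDerivAt_id p.2)
    have h2 := ((hψ.differentiable (by simp)) p).hasFDerivAt.comp_hasDerivAt p.2 h1
    simpa [pderivY, Function.comp_def] using h2.deriv
  rw [this]
  exact (hψ.continuous_fderiv (by simp)).clm_apply continuous_const

lemma ae_snd_transfer {ν : Measure ℝ} [SFinite ν] {P : ℝ → Prop} (h : ∀ᵐ y ∂ν, P y) :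
    ∀ᵐ p ∂((volume : Measure ℝ).prod ν), P p.2 := by
  rw [ae_iff] at h ⊢
  obtain ⟨N, hNsub, hNm, hN0⟩ := exists_measurable_superset_of_null h
  refine measure_mono_null (fun p hp => hNsub hp :
    {p : ℝ × ℝ | ¬ P p.2} ⊆ {p : ℝ × ℝ | p.2 ∈ N}) ?_
  have hset : {p : ℝ × ℝ | p.2 ∈ N} = (univ : Set ℝ) ×ˢ N := by ext p; simp
  show (volume.prod ν) {p : ℝ × ℝ | p.2 ∈ N} = 0
  rw [hset, Measure.prod_prod, hN0, mul_zero]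

lemma measure_strip (l : ℝ) :
    (volume : Measure (ℝ × ℝ)).restrict ((univ : Set ℝ) ×ˢ Icc (-(π * l)) (π * l))
      = (volume : Measure ℝ).prod (volume.restrict (Icc (-(π * l)) (π * l))) := by
  rw [Measure.volume_eq_prod, ← Measure.prod_restrict, Measure.restrict_univ]

lemma algFinal (a d B ρ l : ℝ) (ha : 0 ≤ a) (hd : 0 ≤ d) (hB : 0 ≤ B) (hl : 0 < l) (hρ : 0 < ρ)
    (hmain : B ^ 3 ≤ a ^ 2 * (((2 * (π * l))⁻¹ * B + 2 * (Real.sqrt B * d)) *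
      (2 * (Real.sqrt B * d)))) :
    B ≤ 4 * ρ * (l * ρ + 1) / l * a ^ 2 + 4 * ρ⁻¹ ^ 2 * d ^ 2 := by
  set s := Real.sqrt B with hsdef
  have hs : s ^ 2 = B := Real.sq_sqrt hB
  have hs0 : 0 ≤ s := Real.sqrt_nonneg B
  clear_value s
  rw [← hs] at hmain ⊢
  rcases eq_or_lt_of_le hs0 with h0 | hspos
  · rw [← h0]
    have hlρ0 : 0 < l * ρ := mul_pos hl hρ
    have h1 : 0 ≤ 4 * ρ * (l * ρ + 1) / l * a ^ 2 :=
      mul_nonneg (div_nonneg (by nlinarith) hl.le) (sq_nonneg a)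
    have h2 : 0 ≤ 4 * ρ⁻¹ ^ 2 * d ^ 2 :=
      mul_nonneg (mul_nonneg (by norm_num) (sq_nonneg _)) (sq_nonneg d)
    nlinarith
  · have hπl : 0 < π * l := mul_pos pi_pos hl
    have hdiv : s ^ 4 ≤ 2 * (2 * (π * l))⁻¹ * a ^ 2 * s * d + 4 * a ^ 2 * d ^ 2 := by
      have h2 : (0:ℝ) < s ^ 2 := by positivity
      refine le_of_mul_le_mul_right ?_ h2
      nlinarith [hmain]
    rcases le_total (2 * (2 * (π * l))⁻¹ * a ^ 2 * s * d) (4 * a ^ 2 * d ^ 2) with hc | hc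
    · have hs8 : s ^ 4 ≤ 8 * a ^ 2 * d ^ 2 := by linarith
      have hs2 : s ^ 2 ≤ 3 * (a * d) := by
        have hsq : (s ^ 2) ^ 2 ≤ (3 * (a * d)) ^ 2 := by nlinarith [sq_nonneg (a * d)]
        exact (pow_le_pow_iff_left₀ (sq_nonneg s)
          (by positivity) two_ne_zero).1 hsq
      have hρinv : ρ * ρ⁻¹ = 1 := mul_inv_cancel₀ hρ.ne'
      have hldiv : 4 * ρ * (l * ρ + 1) / l = 4 * ρ ^ 2 + 4 * ρ / l := by field_simp
      rw [hldiv]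
      have had : 2 * (a * d) ≤ ρ ^ 2 * a ^ 2 + ρ⁻¹ ^ 2 * d ^ 2 := by
        nlinarith [sq_nonneg (ρ * a - ρ⁻¹ * d)]
      have hρl : 0 < ρ / l := div_pos hρ hl
      have hn1 : 0 ≤ ρ / l * a ^ 2 := mul_nonneg hρl.le (sq_nonneg a)
      have hn2 : 0 ≤ ρ ^ 2 * a ^ 2 := mul_nonneg (sq_nonneg ρ) (sq_nonneg a)
      have hn3 : 0 ≤ ρ⁻¹ ^ 2 * d ^ 2 := mul_nonneg (sq_nonneg ρ⁻¹) (sq_nonneg d)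
      ring_nf at hn1 hn2 hn3 hs2 had ⊢
      linarith
    · have hs4 : s ^ 4 ≤ 4 * (2 * (π * l))⁻¹ * a ^ 2 * s * d := by linarith
      have h1 : π * l * s ^ 4 ≤ 2 * a ^ 2 * s * d := by
        have := mul_le_mul_of_nonneg_left hs4 hπl.le
        calc π * l * s ^ 4 ≤ π * l * (4 * (2 * (π * l))⁻¹ * a ^ 2 * s * d) := this
        _ = 2 * a ^ 2 * s * d := by
            field_simp
            ring
      have h2 : π * l * s ^ 3 ≤ 2 * a ^ 2 * d := by
        refine le_of_mul_le_mul_right ?_ hspos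
        nlinarith [h1]
      have h3 : 3 * (l * s ^ 3) ≤ 2 * a ^ 2 * d := by
        nlinarith [pi_gt_three, mul_pos hl (pow_pos hspos 3)]
      have h9 : 9 * (l ^ 2 * s ^ 6) ≤ 4 * (a ^ 4 * d ^ 2) := by
        nlinarith [h3, mul_nonneg (mul_nonneg (by norm_num : (0:ℝ) ≤ 3) hl.le) (pow_nonneg hs0 3)]
      have hXY : l * ρ ^ 2 * s ^ 2 ≤ 2 * ρ ^ 3 * a ^ 2 + l * d ^ 2 := by
        have hX3 : (l * ρ ^ 2 * s ^ 2) ^ 3 ≤ (2 * ρ ^ 3 * a ^ 2 + l * d ^ 2) ^ 3 := by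
          nlinarith [mul_le_mul_of_nonneg_left h9
              (mul_nonneg hl.le (pow_nonneg hρ.le 6)),
            mul_nonneg (pow_nonneg hρ.le 9) (sq_nonneg (a * a * a)),
            mul_nonneg (mul_nonneg (pow_nonneg hρ.le 3) (sq_nonneg a))
              (mul_nonneg (sq_nonneg l) (pow_nonneg hd 4)),
            mul_nonneg (pow_nonneg hl.le 3) (pow_nonneg hd 6),
            pow_nonneg hρ.le 9, sq_nonneg (a*a*a)]
        exact (pow_le_pow_iff_left₀
          (mul_nonneg (mul_nonneg hl.le (sq_nonneg ρ)) (sq_nonneg s))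
          (add_nonneg (mul_nonneg (mul_nonneg (by norm_num) (pow_nonneg hρ.le 3)) (sq_nonneg a))
            (mul_nonneg hl.le (sq_nonneg d))) three_ne_zero).1 hX3
      have hlρ : (0:ℝ) < l * ρ ^ 2 := mul_pos hl (pow_pos hρ 2)
      have hgoal : s ^ 2 ≤ (2 * ρ ^ 3 * a ^ 2 + l * d ^ 2) / (l * ρ ^ 2) := by
        rw [le_div_iff₀ hlρ]; nlinarith [hXY]
      refine hgoal.trans ?_
      rw [div_le_iff₀ hlρ]
      have h4 : (4 * ρ * (l * ρ + 1) / l * a ^ 2 + 4 * ρ⁻¹ ^ 2 * d ^ 2) * (l * ρ ^ 2)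
          = 4 * ρ ^ 3 * (l * ρ + 1) * a ^ 2 + 4 * l * d ^ 2 := by
        field_simp
      rw [h4]
      nlinarith [mul_nonneg (pow_nonneg hρ.le 3) (sq_nonneg a), mul_pos hl hρ,
        mul_nonneg hl.le (sq_nonneg d),
        mul_nonneg (mul_nonneg (mul_nonneg hl.le hρ.le) (pow_nonneg hρ.le 3)) (sq_nonneg a)]

/-- Interpolation step of the strip Nash inequality: there is a universal constant `C` such
that for every `l > 0`, every smooth `ψ ∈ H¹(D) ∩ L¹(D)` on `D = ℝ × [-πl, πl]`
(2πl-periodic in `y`), and every `ρ > 0`,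
`‖ψ‖₂² ≤ C ρ(lρ + 1)/l ‖ψ‖₁² + C ρ⁻² ‖∇ψ‖₂²`. -/
theorem nash_interpolation_step :
    ∃ C > (0:ℝ), ∀ l > (0:ℝ), ∀ ψ : ℝ × ℝ → ℝ,
      ContDiff ℝ (⊤ : ℕ∞) ψ →
      (∀ x y, ψ (x, y + 2 * π * l) = ψ (x, y)) →
      IntegrableOn (fun p => |ψ p|) (strip l) →
      IntegrableOn (fun p => ψ p ^ 2) (strip l) →
      IntegrableOn (gradSq ψ) (strip l) →
      ∀ ρ > (0:ℝ),
        (∫ p in strip l, ψ p ^ 2) ≤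
          C * ρ * (l * ρ + 1) / l * (∫ p in strip l, |ψ p|) ^ 2 +
            C * ρ⁻¹ ^ 2 * ∫ p in strip l, gradSq ψ p := by
  refine ⟨4, by norm_num, ?_⟩
  intro l hl ψ hψ _hper h1 h2 hgrad ρ hρ
  have hπl : 0 < π * l := mul_pos pi_pos hl
  have hab : -(π * l) < π * l := by linarith
  set J : Set ℝ := Icc (-(π * l)) (π * l) with hJ
  set ν : Measure ℝ := volume.restrict J with hν
  set μ : Measure (ℝ × ℝ) := (volume : Measure ℝ).prod ν with hμ
  have hμeq : (volume : Measure (ℝ × ℝ)).restrict (strip l) = μ := by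
    rw [show strip l = (univ : Set ℝ) ×ˢ J by ext p; simp [strip, hJ]]
    rw [hμ, hν, hJ]
    exact measure_strip l
  rw [show (∫ p in strip l, ψ p ^ 2) = ∫ p, ψ p ^ 2 ∂μ by rw [hμeq],
    show (∫ p in strip l, |ψ p|) = ∫ p, |ψ p| ∂μ by rw [hμeq],
    show (∫ p in strip l, gradSq ψ p) = ∫ p, gradSq ψ p ∂μ by rw [hμeq]]
  have h1' : Integrable (fun p => |ψ p|) μ := by rw [← hμeq]; exact h1
  have h2' : Integrable (fun p => ψ p ^ 2) μ := by rw [← hμeq]; exact h2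
  have hgrad' : Integrable (gradSq ψ) μ := by rw [← hμeq]; exact hgrad
  -- continuity facts
  have hcψ : Continuous ψ := hψ.continuous
  have hcX : Continuous (pderivX ψ) := contPDX hψ
  have hcY : Continuous (pderivY ψ) := contPDY hψ
  -- integrability of squares of partials and mixed products
  have hgs : ∀ p, pderivX ψ p ^ 2 ≤ gradSq ψ p := fun p =>
    le_add_of_nonneg_right (sq_nonneg _)
  have hgs' : ∀ p, pderivY ψ p ^ 2 ≤ gradSq ψ p := fun p =>
    le_add_of_nonneg_left (sq_nonneg _)
  have hX2 : Integrable (fun p => pderivX ψ p ^ 2) μ := by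
    refine hgrad'.mono' ((hcX.pow 2).aestronglyMeasurable)
      (Filter.Eventually.of_forall fun p => ?_)
    rw [Real.norm_eq_abs, abs_of_nonneg (sq_nonneg _)]; exact hgs p
  have hY2 : Integrable (fun p => pderivY ψ p ^ 2) μ := by
    refine hgrad'.mono' ((hcY.pow 2).aestronglyMeasurable)
      (Filter.Eventually.of_forall fun p => ?_)
    rw [Real.norm_eq_abs, abs_of_nonneg (sq_nonneg _)]; exact hgs' p
  have hXY : Integrable (fun p => |ψ p * pderivX ψ p|) μ := by
    refine (h2'.add hgrad').mono' ((hcψ.mul hcX).abs.aestronglyMeasurable)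
      (Filter.Eventually.of_forall fun p => ?_)
    rw [Real.norm_eq_abs, abs_abs, abs_mul]
    simp only [Pi.add_apply]
    nlinarith [sq_nonneg (|ψ p| - |pderivX ψ p|), sq_abs (ψ p), sq_abs (pderivX ψ p),
      sq_nonneg (pderivX ψ p), sq_nonneg (ψ p), hgs p]
  have hXYy : Integrable (fun p => |ψ p * pderivY ψ p|) μ := by
    refine (h2'.add hgrad').mono' ((hcψ.mul hcY).abs.aestronglyMeasurable)
      (Filter.Eventually.of_forall fun p => ?_)
    rw [Real.norm_eq_abs, abs_abs, abs_mul]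
    simp only [Pi.add_apply]
    nlinarith [sq_nonneg (|ψ p| - |pderivY ψ p|), sq_abs (ψ p), sq_abs (pderivY ψ p),
      sq_nonneg (pderivY ψ p), sq_nonneg (ψ p), hgs' p]
  -- the two envelope functions
  set F : ℝ → ℝ := fun y => 2 * ∫ s : ℝ, |ψ (s, y) * pderivX ψ (s, y)| with hFdef
  set G : ℝ → ℝ := fun x => (π * l - -(π * l))⁻¹ * (∫ t in J, ψ (x, t) ^ 2)
      + 2 * ∫ t in J, |ψ (x, t) * pderivY ψ (x, t)| with hGdef
  have hFnn : ∀ y, 0 ≤ F y := fun y =>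
    mul_nonneg (by norm_num) (integral_nonneg fun s => abs_nonneg _)
  have hGnn : ∀ x, 0 ≤ G x := fun x =>
    add_nonneg (mul_nonneg (inv_nonneg.2 (by linarith)) (integral_nonneg fun t => sq_nonneg _))
      (mul_nonneg (by norm_num) (integral_nonneg fun t => abs_nonneg _))
  -- lemma B : G bounds ψ² everywhere on the strip
  have hGbd : ∀ x : ℝ, ∀ y ∈ J, ψ (x, y) ^ 2 ≤ G x := by
    intro x y hy
    have := lineB (fun t => ψ (x, t)) (fun t => pderivY ψ (x, t))
      (fun t => hasDerivY hψ x t)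
      (hcψ.comp (continuous_const.prodMk continuous_id))
      (hcY.comp (continuous_const.prodMk continuous_id)) hab hy
    simpa [hGdef] using this
  -- lemma A : F bounds ψ² for a.e. y
  have haeInt1 : ∀ᵐ y ∂ν, Integrable (fun x => ψ (x, y) ^ 2) volume := h2'.prod_left_ae
  have haeInt2 : ∀ᵐ y ∂ν, Integrable (fun x => |ψ (x, y) * pderivX ψ (x, y)|) volume :=
    hXY.prod_left_ae
  have hFbd : ∀ᵐ y ∂ν, ∀ x, ψ (x, y) ^ 2 ≤ F y := by
    filter_upwards [haeInt1, haeInt2] with y hy1 hy2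
    intro x
    exact lineA (fun s => ψ (s, y)) (fun s => pderivX ψ (s, y))
      (fun s => hasDerivX hψ s y)
      (hcψ.comp (continuous_id.prodMk continuous_const))
      (hcX.comp (continuous_id.prodMk continuous_const)) hy1 hy2 x
  -- key pointwise bound a.e. on μ
  have haeJ : ∀ᵐ p ∂μ, p.2 ∈ J := ae_snd_transfer (ae_restrict_mem measurableSet_Icc)
  have haeF : ∀ᵐ p ∂μ, ∀ x, ψ (x, p.2) ^ 2 ≤ F p.2 := ae_snd_transfer hFbd
  have hkey : ∀ᵐ p ∂μ, ψ p ^ 4 ≤ G p.1 * F p.2 := by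
    filter_upwards [haeJ, haeF] with p hpJ hpF
    have h1p : ψ p ^ 2 ≤ G p.1 := by simpa using hGbd p.1 p.2 hpJ
    have h2p : ψ p ^ 2 ≤ F p.2 := by simpa using hpF p.1
    calc ψ p ^ 4 = ψ p ^ 2 * ψ p ^ 2 := by ring
    _ ≤ G p.1 * F p.2 := mul_le_mul h1p h2p (sq_nonneg _) (hGnn p.1)
  -- integrability of the product bound and of ψ⁴
  have hH1 : Integrable (fun x => ∫ t in J, ψ (x, t) ^ 2) volume := h2'.integral_prod_left
  have hH2 : Integrable (fun x => ∫ t in J, |ψ (x, t) * pderivY ψ (x, t)|) volume :=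
    hXYy.integral_prod_left
  have hGint : Integrable G volume := by
    rw [hGdef]
    exact (hH1.const_mul _).add (hH2.const_mul 2)
  have hFint : Integrable F ν := by
    rw [hFdef]
    exact (hXY.integral_prod_right).const_mul 2
  have hFGint : Integrable (fun p => G p.1 * F p.2) μ := hGint.mul_prod hFint
  have hψ4int : Integrable (fun p => ψ p ^ 4) μ := by
    refine hFGint.mono' ((hcψ.pow 4).aestronglyMeasurable) ?_
    filter_upwards [hkey] with p hp
    rw [Real.norm_eq_abs, abs_of_nonneg (by positivity)]
    exact hp
  -- Fubini computations
  have hQle : ∫ p, ψ p ^ 4 ∂μ ≤ (∫ x, G x) * (∫ y, F y ∂ν) := by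
    calc ∫ p, ψ p ^ 4 ∂μ ≤ ∫ p, G p.1 * F p.2 ∂μ := integral_mono_ae hψ4int hFGint hkey
    _ = (∫ x, G x) * (∫ y, F y ∂ν) := integral_prod_mul G F
  have hFval : ∫ y, F y ∂ν = 2 * ∫ p, |ψ p * pderivX ψ p| ∂μ := by
    rw [hFdef, integral_const_mul, integral_prod_symm _ hXY]
  have hGval : ∫ x, G x = (π * l - -(π * l))⁻¹ * (∫ p, ψ p ^ 2 ∂μ)
      + 2 * ∫ p, |ψ p * pderivY ψ p| ∂μ := by
    rw [hGdef, integral_add (hH1.const_mul _) (hH2.const_mul 2), integral_const_mul,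
      integral_const_mul, integral_prod _ h2', integral_prod _ hXYy]
  -- Cauchy-Schwarz bounds
  have hBnn : 0 ≤ ∫ p, ψ p ^ 2 ∂μ := integral_nonneg fun p => sq_nonneg _
  have hAnn : 0 ≤ ∫ p, |ψ p| ∂μ := integral_nonneg fun p => abs_nonneg _
  have hDnn : 0 ≤ ∫ p, gradSq ψ p ∂μ := integral_nonneg fun p =>
    add_nonneg (sq_nonneg _) (sq_nonneg _)
  have hQnn : 0 ≤ ∫ p, ψ p ^ 4 ∂μ := integral_nonneg fun p => by positivity
  have hMnn : 0 ≤ ∫ p, |ψ p| ^ 3 ∂μ := integral_nonneg fun p => by positivity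
  have hM3int : Integrable (fun p => |ψ p| ^ 3) μ := by
    refine (h2'.add hψ4int).mono' ((hcψ.abs.pow 3).aestronglyMeasurable)
      (Filter.Eventually.of_forall fun p => ?_)
    rw [Real.norm_eq_abs, abs_of_nonneg (by positivity)]
    simp only [Pi.add_apply]
    nlinarith [sq_nonneg (|ψ p| ^ 2 - |ψ p|), abs_nonneg (ψ p), sq_abs (ψ p)]
  have hXint : ∫ p, pderivX ψ p ^ 2 ∂μ ≤ ∫ p, gradSq ψ p ∂μ :=
    integral_mono hX2 hgrad' hgs
  have hYint : ∫ p, pderivY ψ p ^ 2 ∂μ ≤ ∫ p, gradSq ψ p ∂μ :=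
    integral_mono hY2 hgrad' hgs'
  have hIs : ∫ p, |ψ p * pderivX ψ p| ∂μ ≤
      Real.sqrt (∫ p, ψ p ^ 2 ∂μ) * Real.sqrt (∫ p, gradSq ψ p ∂μ) := by
    have h := myCS μ (fun p => |ψ p|) (fun p => |pderivX ψ p|) (fun p => abs_nonneg _)
      (fun p => abs_nonneg _) hcψ.abs.aestronglyMeasurable hcX.abs.aestronglyMeasurable
      (by simpa [sq_abs] using h2') (by simpa [sq_abs] using hX2)
    calc ∫ p, |ψ p * pderivX ψ p| ∂μ = ∫ p, |ψ p| * |pderivX ψ p| ∂μ := by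
          simp_rw [abs_mul]
    _ ≤ Real.sqrt (∫ p, |ψ p| ^ 2 ∂μ) * Real.sqrt (∫ p, |pderivX ψ p| ^ 2 ∂μ) := h
    _ = Real.sqrt (∫ p, ψ p ^ 2 ∂μ) * Real.sqrt (∫ p, pderivX ψ p ^ 2 ∂μ) := by
          simp_rw [sq_abs]
    _ ≤ Real.sqrt (∫ p, ψ p ^ 2 ∂μ) * Real.sqrt (∫ p, gradSq ψ p ∂μ) :=
          mul_le_mul_of_nonneg_left (Real.sqrt_le_sqrt hXint) (Real.sqrt_nonneg _)
  have hIy : ∫ p, |ψ p * pderivY ψ p| ∂μ ≤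
      Real.sqrt (∫ p, ψ p ^ 2 ∂μ) * Real.sqrt (∫ p, gradSq ψ p ∂μ) := by
    have h := myCS μ (fun p => |ψ p|) (fun p => |pderivY ψ p|) (fun p => abs_nonneg _)
      (fun p => abs_nonneg _) hcψ.abs.aestronglyMeasurable hcY.abs.aestronglyMeasurable
      (by simpa [sq_abs] using h2') (by simpa [sq_abs] using hY2)
    calc ∫ p, |ψ p * pderivY ψ p| ∂μ = ∫ p, |ψ p| * |pderivY ψ p| ∂μ := by
          simp_rw [abs_mul]
    _ ≤ Real.sqrt (∫ p, |ψ p| ^ 2 ∂μ) * Real.sqrt (∫ p, |pderivY ψ p| ^ 2 ∂μ) := h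
    _ = Real.sqrt (∫ p, ψ p ^ 2 ∂μ) * Real.sqrt (∫ p, pderivY ψ p ^ 2 ∂μ) := by
          simp_rw [sq_abs]
    _ ≤ Real.sqrt (∫ p, ψ p ^ 2 ∂μ) * Real.sqrt (∫ p, gradSq ψ p ∂μ) :=
          mul_le_mul_of_nonneg_left (Real.sqrt_le_sqrt hYint) (Real.sqrt_nonneg _)
  -- interpolation: B ≤ √A √M and M ≤ √B √Q
  have e1 : (fun p : ℝ × ℝ => (Real.sqrt |ψ p|) ^ 2) = fun p => |ψ p| :=
    funext fun p => Real.sq_sqrt (abs_nonneg _)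
  have e2 : (fun p : ℝ × ℝ => (|ψ p| * Real.sqrt |ψ p|) ^ 2) = fun p => |ψ p| ^ 3 :=
    funext fun p => by rw [mul_pow, Real.sq_sqrt (abs_nonneg _)]; ring
  have e3 : (fun p : ℝ × ℝ => Real.sqrt |ψ p| * (|ψ p| * Real.sqrt |ψ p|))
      = fun p => ψ p ^ 2 := funext fun p => by
    rw [show Real.sqrt |ψ p| * (|ψ p| * Real.sqrt |ψ p|)
        = |ψ p| * (Real.sqrt |ψ p| * Real.sqrt |ψ p|) by ring,
      Real.mul_self_sqrt (abs_nonneg _), ← sq, sq_abs]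
  have hBA : (∫ p, ψ p ^ 2 ∂μ) ≤
      Real.sqrt (∫ p, |ψ p| ∂μ) * Real.sqrt (∫ p, |ψ p| ^ 3 ∂μ) := by
    have h := myCS μ (fun p => Real.sqrt |ψ p|) (fun p => |ψ p| * Real.sqrt |ψ p|)
      (fun p => Real.sqrt_nonneg _)
      (fun p => mul_nonneg (abs_nonneg _) (Real.sqrt_nonneg _))
      (Real.continuous_sqrt.comp hcψ.abs).aestronglyMeasurable
      (hcψ.abs.mul (Real.continuous_sqrt.comp hcψ.abs)).aestronglyMeasurable
      (by rw [e1]; exact h1') (by rw [e2]; exact hM3int)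
    rw [e1, e2, e3] at h
    exact h
  have hMB : (∫ p, |ψ p| ^ 3 ∂μ) ≤
      Real.sqrt (∫ p, ψ p ^ 2 ∂μ) * Real.sqrt (∫ p, ψ p ^ 4 ∂μ) := by
    have e4 : (fun p : ℝ × ℝ => |ψ p| * ψ p ^ 2) = fun p => |ψ p| ^ 3 :=
      funext fun p => by rw [← sq_abs]; ring
    have e5 : (fun p : ℝ × ℝ => (ψ p ^ 2) ^ 2) = fun p => ψ p ^ 4 :=
      funext fun p => by ring
    have h := myCS μ (fun p => |ψ p|) (fun p => ψ p ^ 2) (fun p => abs_nonneg _)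
      (fun p => sq_nonneg _) hcψ.abs.aestronglyMeasurable
      ((hcψ.pow 2)).aestronglyMeasurable
      (by simpa [sq_abs] using h2') (by rw [e5]; exact hψ4int)
    rw [e4, e5] at h
    simp only [sq_abs] at h
    exact h
  -- assemble the cubic inequality
  have hB4 : (∫ p, ψ p ^ 2 ∂μ) ^ 4 ≤ (∫ p, |ψ p| ∂μ) ^ 2 *
      ((∫ p, ψ p ^ 2 ∂μ) * (∫ p, ψ p ^ 4 ∂μ)) := by
    have hB2 : (∫ p, ψ p ^ 2 ∂μ) ^ 2 ≤ (∫ p, |ψ p| ∂μ) * (∫ p, |ψ p| ^ 3 ∂μ) := by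
      have := pow_le_pow_left₀ hBnn hBA 2
      rwa [mul_pow, Real.sq_sqrt hAnn, Real.sq_sqrt hMnn] at this
    have hM2 : (∫ p, |ψ p| ^ 3 ∂μ) ^ 2 ≤ (∫ p, ψ p ^ 2 ∂μ) * (∫ p, ψ p ^ 4 ∂μ) := by
      have := pow_le_pow_left₀ hMnn hMB 2
      rwa [mul_pow, Real.sq_sqrt hBnn, Real.sq_sqrt hQnn] at this
    nlinarith [sq_nonneg (∫ p, |ψ p| ∂μ), sq_nonneg (∫ p, ψ p ^ 2 ∂μ),
      mul_nonneg hAnn hMnn, hB2, hM2]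
  have hQbd : (∫ p, ψ p ^ 4 ∂μ) ≤
      ((2 * (π * l))⁻¹ * (∫ p, ψ p ^ 2 ∂μ)
          + 2 * (Real.sqrt (∫ p, ψ p ^ 2 ∂μ) * Real.sqrt (∫ p, gradSq ψ p ∂μ))) *
        (2 * (Real.sqrt (∫ p, ψ p ^ 2 ∂μ) * Real.sqrt (∫ p, gradSq ψ p ∂μ))) := by
    have hGle : (∫ x, G x) ≤ (2 * (π * l))⁻¹ * (∫ p, ψ p ^ 2 ∂μ)
        + 2 * (Real.sqrt (∫ p, ψ p ^ 2 ∂μ) * Real.sqrt (∫ p, gradSq ψ p ∂μ)) := by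
      rw [hGval, show π * l - -(π * l) = 2 * (π * l) by ring]
      have := hIy
      linarith
    have hFle : (∫ y, F y ∂ν) ≤
        2 * (Real.sqrt (∫ p, ψ p ^ 2 ∂μ) * Real.sqrt (∫ p, gradSq ψ p ∂μ)) := by
      rw [hFval]; linarith [hIs]
    have hFnn' : 0 ≤ ∫ y, F y ∂ν := integral_nonneg hFnn
    have hsnn : 0 ≤ 2 * (Real.sqrt (∫ p, ψ p ^ 2 ∂μ) * Real.sqrt (∫ p, gradSq ψ p ∂μ)) :=
      mul_nonneg (by norm_num) (mul_nonneg (Real.sqrt_nonneg _) (Real.sqrt_nonneg _))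
    calc (∫ p, ψ p ^ 4 ∂μ) ≤ (∫ x, G x) * (∫ y, F y ∂ν) := hQle
    _ ≤ _ := mul_le_mul hGle hFle hFnn' (by
        have h0 : 0 ≤ (2 * (π * l))⁻¹ * (∫ p, ψ p ^ 2 ∂μ) :=
          mul_nonneg (inv_nonneg.2 (by linarith)) hBnn
        linarith)
  have hmain : (∫ p, ψ p ^ 2 ∂μ) ^ 3 ≤ (∫ p, |ψ p| ∂μ) ^ 2 *
      (((2 * (π * l))⁻¹ * (∫ p, ψ p ^ 2 ∂μ)
          + 2 * (Real.sqrt (∫ p, ψ p ^ 2 ∂μ) * Real.sqrt (∫ p, gradSq ψ p ∂μ))) *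
        (2 * (Real.sqrt (∫ p, ψ p ^ 2 ∂μ) * Real.sqrt (∫ p, gradSq ψ p ∂μ)))) := by
    rcases eq_or_lt_of_le hBnn with h0 | hpos
    · rw [← h0]
      simp [Real.sqrt_zero]
    · have hcube : (∫ p, ψ p ^ 2 ∂μ) ^ 3 ≤ (∫ p, |ψ p| ∂μ) ^ 2 * (∫ p, ψ p ^ 4 ∂μ) := by
        refine le_of_mul_le_mul_right ?_ hpos
        nlinarith [hB4]
      refine hcube.trans ?_
      exact mul_le_mul_of_nonneg_left hQbd (sq_nonneg _)
  have halg := algFinal (∫ p, |ψ p| ∂μ) (Real.sqrt (∫ p, gradSq ψ p ∂μ))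
    (∫ p, ψ p ^ 2 ∂μ) ρ l hAnn (Real.sqrt_nonneg _) hBnn hl hρ hmain
  rwa [Real.sq_sqrt hDnn] at halg
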